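/- Let n ≥ 2 and m ≥ 1 be integers. The number of functions a : {x_i, y_i, z_i : 1 ≤ i ≤ n} → ℕ with total sum m such that there is no pair 1 ≤ i < j ≤ n with a(x_i) > 0, a(y_i) > 0 and a(z_j) > 0 (i.e., the number of monomials of degree m in k[x_1, y_1, z_1, …, x_n, y_n, z_n] not divisible by any x_i y_i z_j with i < j) equals Σ_{i=0}^{n} C(n, i)·C(2n + m − i, 2n) − C(2n + m − 1, 2n). -/

import Mathlib

open Finset

/-- triples (u, v, w) -/
abbrev Trip3 (n : ℕ) := (Fin n → ℕ) × (Fin n → ℕ) × ℕ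

def sump {n : ℕ} (p : Trip3 n) : ℕ := (∑ i, p.1 i) + (∑ i, p.2.1 i) + p.2.2

def tripEquiv (n : ℕ) : ((Fin n ⊕ (Fin n ⊕ Unit)) → ℕ) ≃ Trip3 n where
  toFun f := (fun i => f (.inl i), fun i => f (.inr (.inl i)), f (.inr (.inr ())))
  invFun p := Sum.elim p.1 (Sum.elim p.2.1 fun _ => p.2.2)
  left_inv f := by funext x; rcases x with i | i | ⟨⟩ <;> rfl
  right_inv p := rfl

def Trip (n r : ℕ) : Finset (Trip3 n) :=
  (Finset.piAntidiag Finset.univ r).map (tripEquiv n).toEmbedding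

lemma mem_Trip {n r : ℕ} {p : Trip3 n} : p ∈ Trip n r ↔ sump p = r := by
  obtain ⟨u, v, w⟩ := p
  simp only [Trip, Finset.mem_map_equiv, Finset.mem_piAntidiag, Finset.mem_univ, imp_true_iff,
    and_true, tripEquiv, Equiv.coe_fn_symm_mk, sump, Fintype.sum_sum_type]
  simp [Fintype.sum_unique, Equiv.symm]
  omega

lemma card_Trip (n r : ℕ) : (Trip n r).card = (2 * n + r).choose (2 * n) := by
  rw [Trip, Finset.card_map, ← Finset.map_sym_eq_piAntidiag, Finset.card_map, Finset.sym_univ]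
  have h1 : Fintype.card (Sym (Fin n ⊕ (Fin n ⊕ Unit)) r) =
      (Fintype.card (Fin n ⊕ (Fin n ⊕ Unit)) + r - 1).choose r := Sym.card_sym_eq_choose r
  have h2 : Fintype.card (Fin n ⊕ (Fin n ⊕ Unit)) = 2 * n + 1 := by simp; omega
  rw [Finset.card_univ, h1, h2]
  have h3 : 2 * n + 1 + r - 1 = 2 * n + r := by omega
  rw [h3]
  have h4 := Nat.choose_symm (n := 2 * n + r) (k := r) (by omega)
  have h5 : 2 * n + r - r = 2 * n := by omega
  rw [h5] at h4
  exact h4.symm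

/-- the "good" predicate -/
def good {n : ℕ} (a : Fin n × Fin 3 → ℕ) : Prop :=
  ¬ ∃ i j : Fin n, i < j ∧ 0 < a (i, 0) ∧ 0 < a (i, 1) ∧ 0 < a (j, 2)

instance {n : ℕ} : DecidablePred (good (n := n)) := fun _ => by unfold good; infer_instance

def G (n m : ℕ) : Finset (Fin n × Fin 3 → ℕ) :=
  (Finset.piAntidiag Finset.univ m).filter good

lemma sum_prod3 {n : ℕ} (a : Fin n × Fin 3 → ℕ) :
    ∑ x : Fin n × Fin 3, a x = ∑ i : Fin n, (a (i, 0) + a (i, 1) + a (i, 2)) := by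
  rw [Fintype.sum_prod_type]
  exact Finset.sum_congr rfl fun i _ => by rw [Fin.sum_univ_three]

lemma mem_G {n m : ℕ} {a : Fin n × Fin 3 → ℕ} :
    a ∈ G n m ↔ (∑ i : Fin n, (a (i, 0) + a (i, 1) + a (i, 2))) = m ∧ good a := by
  simp [G, Finset.mem_piAntidiag, sum_prod3]

def Tr (n m : ℕ) (T : Finset (Fin n)) : Finset (Trip3 n) :=
  if T.card ≤ m then Trip n (m - T.card) else ∅

def BIG (n m : ℕ) : Finset (Σ _ : Finset (Fin n), Trip3 n) :=
  (Finset.univ : Finset (Finset (Fin n))).sigma fun T => Tr n m T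

lemma mem_BIG {n m : ℕ} {x : Σ _ : Finset (Fin n), Trip3 n} :
    x ∈ BIG n m ↔ sump x.2 + x.1.card = m := by
  obtain ⟨T, p⟩ := x
  by_cases h : T.card ≤ m <;> simp [BIG, Tr, h, mem_Trip] <;> omega

def funA {n : ℕ} (T : Finset (Fin n)) (u v : Fin n → ℕ) : Fin n × Fin 3 → ℕ :=
  fun x => if x.2 = 0 then (if x.1 ∈ T then 0 else u x.1)
    else if x.2 = 1 then (if x.1 ∈ T then u x.1 + 1 else 0)
    else v x.1

def funB {n : ℕ} (k : Fin n) (T : Finset (Fin n)) (u v : Fin n → ℕ) (w : ℕ) :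
    Fin n × Fin 3 → ℕ :=
  fun x => if x.2 = 0 then (if x.1 = k then u x.1 + 1 else if x.1 ∈ T then 0 else u x.1)
    else if x.2 = 1 then (if x.1 = k then v x.1 + 1 else if x.1 ∈ T then u x.1 + 1
       else if x.1 < k then 0 else v x.1)
    else (if x.1 < k then v x.1 else if x.1 = k then w - 1 else 0)

def Phi {n : ℕ} (x : Σ _ : Finset (Fin n), Trip3 n) : (Fin n × Fin 3 → ℕ) ⊕ Trip3 n :=
  if x.2.2.2 = 0 then .inl (funA x.1 x.2.1 x.2.2.1)
  else if hT : x.1.Nonempty then .inl (funB (x.1.max' hT) x.1 x.2.1 x.2.2.1 x.2.2.2)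
  else .inr (x.2.1, x.2.2.1, x.2.2.2 - 1)

def Ki {n : ℕ} (a : Fin n × Fin 3 → ℕ) : Finset (Fin n) :=
  Finset.univ.filter fun i => 0 < a (i, 0) ∧ 0 < a (i, 1)

def Psi {n : ℕ} (y : (Fin n × Fin 3 → ℕ) ⊕ Trip3 n) : Σ _ : Finset (Fin n), Trip3 n :=
  match y with
  | .inr p => ⟨∅, (p.1, p.2.1, p.2.2 + 1)⟩
  | .inl a =>
    if hK : (Ki a).Nonempty then
      ⟨insert ((Ki a).min' hK) (Finset.univ.filter fun i => i < (Ki a).min' hK ∧ 0 < a (i, 1)),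
        (fun i => if i = (Ki a).min' hK then a (i, 0) - 1
            else if i < (Ki a).min' hK ∧ 0 < a (i, 1) then a (i, 1) - 1 else a (i, 0),
         fun i => if i < (Ki a).min' hK then a (i, 2)
            else if i = (Ki a).min' hK then a (i, 1) - 1 else a (i, 1),
         a ((Ki a).min' hK, 2) + 1)⟩
    else
      ⟨Finset.univ.filter fun i => 0 < a (i, 1),
        (fun i => if 0 < a (i, 1) then a (i, 1) - 1 else a (i, 0),
         fun i => a (i, 2), 0)⟩

lemma funA_0 {n : ℕ} (T : Finset (Fin n)) (u v : Fin n → ℕ) (i : Fin n) :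
    funA T u v (i, 0) = if i ∈ T then 0 else u i := rfl

lemma funA_1 {n : ℕ} (T : Finset (Fin n)) (u v : Fin n → ℕ) (i : Fin n) :
    funA T u v (i, 1) = if i ∈ T then u i + 1 else 0 := rfl

lemma funA_2 {n : ℕ} (T : Finset (Fin n)) (u v : Fin n → ℕ) (i : Fin n) :
    funA T u v (i, 2) = v i := rfl

lemma funB_0 {n : ℕ} (k : Fin n) (T : Finset (Fin n)) (u v : Fin n → ℕ) (w : ℕ) (i : Fin n) :
    funB k T u v w (i, 0) = if i = k then u i + 1 else if i ∈ T then 0 else u i := rfl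

lemma funB_1 {n : ℕ} (k : Fin n) (T : Finset (Fin n)) (u v : Fin n → ℕ) (w : ℕ) (i : Fin n) :
    funB k T u v w (i, 1) = if i = k then v i + 1 else if i ∈ T then u i + 1
      else if i < k then 0 else v i := rfl

lemma funB_2 {n : ℕ} (k : Fin n) (T : Finset (Fin n)) (u v : Fin n → ℕ) (w : ℕ) (i : Fin n) :
    funB k T u v w (i, 2) = if i < k then v i else if i = k then w - 1 else 0 := rfl

lemma sum_ite_card {n : ℕ} (T : Finset (Fin n)) :
    (∑ i : Fin n, if i ∈ T then 1 else 0) = T.card := by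
  rw [Finset.sum_ite_mem, Finset.univ_inter, Finset.card_eq_sum_ones]

lemma hi_lemma {n m : ℕ} (hm : 1 ≤ m) :
    ∀ x ∈ BIG n m, Phi x ∈ (G n m).disjSum (Trip n (m - 1)) := by
  rintro ⟨T, u, v, w⟩ hx
  rw [mem_BIG] at hx
  simp only [sump] at hx
  by_cases hw : w = 0
  · rw [show Phi ⟨T, (u, v, w)⟩ = .inl (funA T u v) from if_pos hw]
    rw [Finset.inl_mem_disjSum, mem_G]
    constructor
    · have hpt : ∀ i : Fin n, funA T u v (i, 0) + funA T u v (i, 1) + funA T u v (i, 2)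
          = u i + v i + (if i ∈ T then 1 else 0) := by
        intro i
        rw [funA_0, funA_1, funA_2]
        split_ifs <;> omega
      rw [Finset.sum_congr rfl fun i _ => hpt i, Finset.sum_add_distrib,
        Finset.sum_add_distrib, sum_ite_card]
      omega
    · rintro ⟨i, j, hij, h0, h1, h2⟩
      rw [funA_0] at h0
      rw [funA_1] at h1
      by_cases hiT : i ∈ T <;> simp [hiT] at h0 h1
  · rw [show Phi ⟨T, (u, v, w)⟩
        = if hT : T.Nonempty then .inl (funB (T.max' hT) T u v w) else .inr (u, v, w - 1)
      from if_neg hw]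
    by_cases hT : T.Nonempty
    · rw [dif_pos hT]
      set k := T.max' hT with hk
      have hkT : k ∈ T := T.max'_mem hT
      have hle : ∀ i ∈ T, i ≤ k := fun i hi => T.le_max' i hi
      rw [Finset.inl_mem_disjSum, mem_G]
      constructor
      · have hpt : ∀ i : Fin n,
            funB k T u v w (i, 0) + funB k T u v w (i, 1) + funB k T u v w (i, 2)
            = u i + v i + (if i ∈ T then 1 else 0) + (if i = k then w else 0) := by
          intro i
          rw [funB_0, funB_1, funB_2]
          by_cases hik : i = k
          · subst hik
            simp [hkT, lt_irrefl]
            omega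
          · by_cases hiT : i ∈ T
            · have hlt : i < k := lt_of_le_of_ne (hle i hiT) hik
              simp [hik, hiT, hlt]
              omega
            · simp only [if_neg hik, if_neg hiT]
              by_cases hlt : i < k <;> simp [hlt]
        rw [Finset.sum_congr rfl fun i _ => hpt i, Finset.sum_add_distrib,
          Finset.sum_add_distrib, Finset.sum_add_distrib, sum_ite_card,
          Finset.sum_ite_eq' Finset.univ k (fun _ => w), if_pos (Finset.mem_univ k)]
        omega
      · rintro ⟨i, j, hij, h0, h1, h2⟩
        rw [funB_0] at h0
        rw [funB_1] at h1
        rw [funB_2] at h2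
        have hjk : j ≤ k := by
          by_contra hcon
          push_neg at hcon
          rw [if_neg (by exact not_lt_of_gt hcon), if_neg (by exact ne_of_gt hcon)] at h2
          exact absurd h2 (lt_irrefl 0)
        have hik : i < k := lt_of_lt_of_le hij hjk
        rw [if_neg (ne_of_lt hik)] at h0 h1
        by_cases hiT : i ∈ T
        · rw [if_pos hiT] at h0
          exact absurd h0 (lt_irrefl 0)
        · rw [if_neg hiT, if_pos hik] at h1
          exact absurd h1 (lt_irrefl 0)
    · rw [dif_neg hT]
      rw [Finset.inr_mem_disjSum, mem_Trip]
      have hT0 : T.card = 0 := by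
        rw [Finset.card_eq_zero]
        exact Finset.not_nonempty_iff_eq_empty.mp hT
      simp only [sump]
      omega

lemma Psi_inl_pos {n : ℕ} (a : Fin n × Fin 3 → ℕ) (hK : (Ki a).Nonempty) :
    Psi (.inl a) =
      ⟨insert ((Ki a).min' hK) (Finset.univ.filter fun i => i < (Ki a).min' hK ∧ 0 < a (i, 1)),
        (fun i => if i = (Ki a).min' hK then a (i, 0) - 1
            else if i < (Ki a).min' hK ∧ 0 < a (i, 1) then a (i, 1) - 1 else a (i, 0),
         fun i => if i < (Ki a).min' hK then a (i, 2)
            else if i = (Ki a).min' hK then a (i, 1) - 1 else a (i, 1),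
         a ((Ki a).min' hK, 2) + 1)⟩ := by
  simp only [Psi]
  rw [dif_pos hK]

lemma Psi_inl_neg {n : ℕ} (a : Fin n × Fin 3 → ℕ) (hK : ¬ (Ki a).Nonempty) :
    Psi (.inl a) =
      ⟨Finset.univ.filter fun i => 0 < a (i, 1),
        (fun i => if 0 < a (i, 1) then a (i, 1) - 1 else a (i, 0),
         fun i => a (i, 2), 0)⟩ := by
  simp only [Psi]
  rw [dif_neg hK]

lemma not_mem_Ki {n : ℕ} {a : Fin n × Fin 3 → ℕ} {i : Fin n} (h : i ∉ Ki a) :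
    ¬ (0 < a (i, 0) ∧ 0 < a (i, 1)) := by
  intro hcon
  exact h (Finset.mem_filter.mpr ⟨Finset.mem_univ i, hcon⟩)

lemma hj_lemma {n m : ℕ} (hm : 1 ≤ m) :
    ∀ y ∈ (G n m).disjSum (Trip n (m - 1)), Psi y ∈ BIG n m := by
  intro y hy
  rcases y with a | p
  · rw [Finset.inl_mem_disjSum, mem_G] at hy
    obtain ⟨hsum, hgood⟩ := hy
    have hgood' : ∀ i j : Fin n, i < j → 0 < a (i, 0) → 0 < a (i, 1) → a (j, 2) = 0 := by
      intro i j hij h0 h1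
      by_contra hc
      exact hgood ⟨i, j, hij, h0, h1, Nat.pos_of_ne_zero hc⟩
    by_cases hK : (Ki a).Nonempty
    · rw [Psi_inl_pos a hK, mem_BIG]
      set k := (Ki a).min' hK with hkdef
      have hkK : k ∈ Ki a := (Ki a).min'_mem hK
      have hk0 : 0 < a (k, 0) := (Finset.mem_filter.mp hkK).2.1
      have hk1 : 0 < a (k, 1) := (Finset.mem_filter.mp hkK).2.2
      have hmin : ∀ i ∈ Ki a, k ≤ i := fun i hi => (Ki a).min'_le i hi
      simp only [sump]
      have hknot : k ∉ Finset.univ.filter fun i => i < k ∧ 0 < a (i, 1) := by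
        simp [lt_irrefl]
      rw [Finset.card_insert_of_notMem hknot, Finset.card_filter]
      have hpt : ∀ i : Fin n,
          (if i = k then a (i, 0) - 1
            else if i < k ∧ 0 < a (i, 1) then a (i, 1) - 1 else a (i, 0)) +
          (if i < k then a (i, 2) else if i = k then a (i, 1) - 1 else a (i, 1)) +
          (if i < k ∧ 0 < a (i, 1) then 1 else 0) +
          (if i = k then a (k, 2) + 2 else 0) = a (i, 0) + a (i, 1) + a (i, 2) := by
        intro i
        by_cases hik : i = k
        · subst hik
          simp [lt_irrefl]
          omega
        · by_cases hlt : i < k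
          · have hni := not_mem_Ki (fun hc => absurd (hmin i hc) (not_le_of_gt hlt))
            by_cases h1 : 0 < a (i, 1) <;>
              simp only [if_neg hik, if_pos hlt, hlt, h1, and_true, and_false, if_true,
                if_false, if_pos, if_neg (fun hc => hik hc : ¬ i = k)] <;> omega
          · have hki : k < i := lt_of_le_of_ne (le_of_not_gt hlt) (Ne.symm hik)
            have hz : a (i, 2) = 0 := hgood' k i hki hk0 hk1
            simp only [if_neg hik, if_neg hlt, hlt, false_and, if_false]
            omega
      have hsum2 := Finset.sum_congr rfl fun i (_ : i ∈ Finset.univ) => hpt i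
      rw [Finset.sum_add_distrib, Finset.sum_add_distrib, Finset.sum_add_distrib,
        Finset.sum_ite_eq' Finset.univ k (fun _ => a (k, 2) + 2),
        if_pos (Finset.mem_univ k), hsum] at hsum2
      omega
    · rw [Psi_inl_neg a hK, mem_BIG]
      have hni : ∀ i : Fin n, ¬ (0 < a (i, 0) ∧ 0 < a (i, 1)) := by
        intro i
        exact not_mem_Ki (fun hc => hK ⟨i, hc⟩)
      simp only [sump]
      rw [Finset.card_filter]
      have hpt : ∀ i : Fin n,
          (if 0 < a (i, 1) then a (i, 1) - 1 else a (i, 0)) + a (i, 2) +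
            (if 0 < a (i, 1) then 1 else 0) = a (i, 0) + a (i, 1) + a (i, 2) := by
        intro i
        have := hni i
        by_cases h1 : 0 < a (i, 1) <;> simp [h1] <;> omega
      have hsum2 := Finset.sum_congr rfl fun i (_ : i ∈ Finset.univ) => hpt i
      rw [Finset.sum_add_distrib, Finset.sum_add_distrib, hsum] at hsum2
      omega
  · rw [Finset.inr_mem_disjSum, mem_Trip] at hy
    rw [mem_BIG]
    simp only [Psi, sump] at hy ⊢
    rw [Finset.card_empty]
    omega

lemma prod3_ext {n : ℕ} {a b : Fin n × Fin 3 → ℕ}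
    (h0 : ∀ i, a (i, 0) = b (i, 0)) (h1 : ∀ i, a (i, 1) = b (i, 1))
    (h2 : ∀ i, a (i, 2) = b (i, 2)) : a = b := by
  funext x
  obtain ⟨i, t⟩ := x
  fin_cases t
  · exact h0 i
  · exact h1 i
  · exact h2 i

lemma left_inv_lemma {n m : ℕ} : ∀ x ∈ BIG n m, Psi (Phi x) = x := by
  rintro ⟨T, u, v, w⟩ _
  by_cases hw : w = 0
  · rw [show Phi ⟨T, (u, v, w)⟩ = .inl (funA T u v) from if_pos hw]
    have hKi : Ki (funA T u v) = ∅ := by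
      ext i
      simp only [Ki, Finset.mem_filter, Finset.mem_univ, true_and, Finset.notMem_empty,
        iff_false]
      by_cases hiT : i ∈ T <;> simp [hiT, funA_0, funA_1]
    rw [Psi_inl_neg _ (by rw [hKi]; exact Finset.not_nonempty_empty)]
    have h1 : (Finset.univ.filter fun i => 0 < funA T u v (i, 1)) = T := by
      ext i
      simp only [Finset.mem_filter, Finset.mem_univ, true_and]
      by_cases hiT : i ∈ T <;> simp [hiT, funA_1]
    have h2 : (fun i => if 0 < funA T u v (i, 1) then funA T u v (i, 1) - 1
        else funA T u v (i, 0)) = u := by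
      funext i
      rw [funA_0, funA_1]
      by_cases hiT : i ∈ T <;> simp [hiT]
    have h3 : (fun i => funA T u v (i, 2)) = v := funext fun i => funA_2 T u v i
    rw [h1, h2, h3, hw]
  · rw [show Phi ⟨T, (u, v, w)⟩
        = if hT : T.Nonempty then .inl (funB (T.max' hT) T u v w) else .inr (u, v, w - 1)
      from if_neg hw]
    by_cases hT : T.Nonempty
    · rw [dif_pos hT]
      set k := T.max' hT with hkdef
      have hkT : k ∈ T := T.max'_mem hT
      have hle : ∀ i ∈ T, i ≤ k := fun i hi => T.le_max' i hi
      have hmemT : ∀ j, j ∈ T ↔ (j = k ∨ (j < k ∧ j ∈ T)) := by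
        intro j
        constructor
        · intro hj
          rcases eq_or_lt_of_le (hle j hj) with h | h
          · exact Or.inl h
          · exact Or.inr ⟨h, hj⟩
        · rintro (rfl | ⟨_, hj⟩)
          · exact hkT
          · exact hj
      have hkKi : k ∈ Ki (funB k T u v w) := by
        simp only [Ki, Finset.mem_filter]
        simp [funB_0, funB_1]
      have hKne : (Ki (funB k T u v w)).Nonempty := ⟨k, hkKi⟩
      have hmin : (Ki (funB k T u v w)).min' hKne = k := by
        apply le_antisymm (Finset.min'_le _ k hkKi)
        apply Finset.le_min'
        intro j hj
        by_contra hcon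
        push_neg at hcon
        have hjk : ¬ j = k := ne_of_lt hcon
        have hj0 : 0 < funB k T u v w (j, 0) := (Finset.mem_filter.mp hj).2.1
        have hj1 : 0 < funB k T u v w (j, 1) := (Finset.mem_filter.mp hj).2.2
        rw [funB_0, if_neg hjk] at hj0
        rw [funB_1, if_neg hjk] at hj1
        by_cases hjT : j ∈ T
        · rw [if_pos hjT] at hj0
          exact absurd hj0 (lt_irrefl 0)
        · rw [if_neg hjT, if_pos hcon] at hj1
          exact absurd hj1 (lt_irrefl 0)
      rw [Psi_inl_pos _ hKne]
      simp only [hmin]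
      have h1 : insert k (Finset.univ.filter fun i => i < k ∧ 0 < funB k T u v w (i, 1)) = T := by
        ext j
        rw [Finset.mem_insert, Finset.mem_filter]
        rw [hmemT j]
        simp only [Finset.mem_univ, true_and]
        constructor
        · rintro (rfl | ⟨hlt, hpos⟩)
          · exact Or.inl rfl
          · rw [funB_1, if_neg (ne_of_lt hlt)] at hpos
            by_cases hjT : j ∈ T
            · exact Or.inr ⟨hlt, hjT⟩
            · rw [if_neg hjT, if_pos hlt] at hpos
              exact absurd hpos (lt_irrefl 0)
        · rintro (rfl | ⟨hlt, hjT⟩)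
          · exact Or.inl rfl
          · refine Or.inr ⟨hlt, ?_⟩
            rw [funB_1, if_neg (ne_of_lt hlt), if_pos hjT]
            omega
      have h2 : (fun i => if i = k then funB k T u v w (i, 0) - 1
          else if i < k ∧ 0 < funB k T u v w (i, 1) then funB k T u v w (i, 1) - 1
          else funB k T u v w (i, 0)) = u := by
        funext j
        by_cases hjk : j = k
        · subst hjk
          simp [funB_0]
        · by_cases hjT : j ∈ T
          · have hlt : j < k := lt_of_le_of_ne (hle j hjT) hjk
            simp [funB_0, funB_1, hjk, hjT, hlt]
          · by_cases hlt : j < k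
            · simp [funB_0, funB_1, hjk, hjT, hlt]
            · simp [funB_0, funB_1, hjk, hjT, hlt]
      have h3 : (fun i => if i < k then funB k T u v w (i, 2)
          else if i = k then funB k T u v w (i, 1) - 1 else funB k T u v w (i, 1)) = v := by
        funext j
        by_cases hlt : j < k
        · simp [funB_2, hlt]
        · by_cases hjk : j = k
          · subst hjk
            simp [funB_1, lt_irrefl]
          · have hjT : j ∉ T := fun hc => ((hmemT j).mp hc).elim hjk (fun h => hlt h.1)
            simp [funB_1, hlt, hjk, hjT]
      have h4 : funB k T u v w (k, 2) + 1 = w := by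
        rw [funB_2, if_neg (lt_irrefl k), if_pos rfl]
        omega
      rw [h1, h2, h3, h4]
    · rw [dif_neg hT]
      have hT0 : T = ∅ := Finset.not_nonempty_iff_eq_empty.mp hT
      have hw1 : w - 1 + 1 = w := by omega
      simp only [Psi, hT0, hw1]

lemma Phi_zero {n : ℕ} (T : Finset (Fin n)) (u v : Fin n → ℕ) :
    Phi ⟨T, (u, v, 0)⟩ = .inl (funA T u v) := rfl

lemma Phi_pos {n : ℕ} (T : Finset (Fin n)) (u v : Fin n → ℕ) (w : ℕ) (hw : ¬ w = 0)
    (hT : T.Nonempty) : Phi ⟨T, (u, v, w)⟩ = .inl (funB (T.max' hT) T u v w) := by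
  simp only [Phi]
  rw [if_neg hw, dif_pos hT]

lemma Phi_neg {n : ℕ} (T : Finset (Fin n)) (u v : Fin n → ℕ) (w : ℕ) (hw : ¬ w = 0)
    (hT : ¬ T.Nonempty) : Phi ⟨T, (u, v, w)⟩ = .inr (u, v, w - 1) := by
  simp only [Phi]
  rw [if_neg hw, dif_neg hT]

lemma right_inv_lemma {n m : ℕ} :
    ∀ y ∈ (G n m).disjSum (Trip n (m - 1)), Phi (Psi y) = y := by
  intro y hy
  rcases y with a | p
  · rw [Finset.inl_mem_disjSum, mem_G] at hy
    obtain ⟨hsum, hgood⟩ := hy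
    have hgood' : ∀ i j : Fin n, i < j → 0 < a (i, 0) → 0 < a (i, 1) → a (j, 2) = 0 := by
      intro i j hij h0 h1
      by_contra hc
      exact hgood ⟨i, j, hij, h0, h1, Nat.pos_of_ne_zero hc⟩
    by_cases hK : (Ki a).Nonempty
    · rw [Psi_inl_pos a hK]
      set k := (Ki a).min' hK with hkdef
      have hkKi : k ∈ Ki a := (Ki a).min'_mem hK
      have hk0 : 0 < a (k, 0) := (Finset.mem_filter.mp hkKi).2.1
      have hk1 : 0 < a (k, 1) := (Finset.mem_filter.mp hkKi).2.2
      have hmin : ∀ i ∈ Ki a, k ≤ i := fun i hi => (Ki a).min'_le i hi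
      have hsmall : ∀ i : Fin n, i < k → ¬ (0 < a (i, 0) ∧ 0 < a (i, 1)) := by
        intro i hi
        exact not_mem_Ki (fun hc => absurd (hmin i hc) (not_le_of_gt hi))
      have hbig : ∀ i : Fin n, k < i → a (i, 2) = 0 := fun i hi => hgood' k i hi hk0 hk1
      have hT : (insert k (Finset.univ.filter fun i => i < k ∧ 0 < a (i, 1))).Nonempty :=
        ⟨k, Finset.mem_insert_self k _⟩
      have hmemT : ∀ j : Fin n,
          j ∈ insert k (Finset.univ.filter fun i => i < k ∧ 0 < a (i, 1)) ↔
            (j = k ∨ (j < k ∧ 0 < a (j, 1))) := by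
        intro j
        simp [Finset.mem_insert, Finset.mem_filter]
      have hmax : (insert k (Finset.univ.filter fun i => i < k ∧ 0 < a (i, 1))).max' hT = k := by
        apply le_antisymm
        · apply Finset.max'_le
          intro j hj
          rcases (hmemT j).mp hj with rfl | ⟨h, _⟩
          · exact le_refl _
          · exact le_of_lt h
        · exact Finset.le_max' _ k (Finset.mem_insert_self k _)
      rw [Phi_pos _ _ _ _ (by omega) hT, hmax]
      congr 1
      apply prod3_ext
      · intro i
        by_cases hik : i = k
        · subst hik
          simp [funB_0]
          omega
        · by_cases hiT : i ∈ insert k (Finset.univ.filter fun i => i < k ∧ 0 < a (i, 1))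
          · obtain ⟨hlt, h1⟩ := ((hmemT i).mp hiT).resolve_left hik
            have := hsmall i hlt
            simp [funB_0, hik, hiT]
            omega
          · have hcond : ¬ (i < k ∧ 0 < a (i, 1)) := fun hc => hiT ((hmemT i).mpr (Or.inr hc))
            simp [funB_0, hik, hiT, hcond]
      · intro i
        by_cases hik : i = k
        · subst hik
          simp [funB_1, lt_irrefl]
          omega
        · by_cases hiT : i ∈ insert k (Finset.univ.filter fun i => i < k ∧ 0 < a (i, 1))
          · obtain ⟨hlt, h1⟩ := ((hmemT i).mp hiT).resolve_left hik
            simp [funB_1, hik, hiT, hlt, h1]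
            omega
          · have hcond : ¬ (i < k ∧ 0 < a (i, 1)) := fun hc => hiT ((hmemT i).mpr (Or.inr hc))
            by_cases hlt : i < k
            · have h1 : ¬ 0 < a (i, 1) := fun hc => hcond ⟨hlt, hc⟩
              simp [funB_1, hik, hiT, hlt, h1]
              omega
            · simp [funB_1, hik, hiT, hlt]
      · intro i
        by_cases hlt : i < k
        · simp [funB_2, hlt]
        · by_cases hik : i = k
          · subst hik
            simp [funB_2, lt_irrefl]
          · have hki : k < i := lt_of_le_of_ne (le_of_not_gt hlt) (Ne.symm hik)
            simp [funB_2, hlt, hik]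
            exact (hbig i hki).symm
    · rw [Psi_inl_neg a hK, Phi_zero]
      have hni : ∀ i : Fin n, ¬ (0 < a (i, 0) ∧ 0 < a (i, 1)) := by
        intro i
        exact not_mem_Ki (fun hc => hK ⟨i, hc⟩)
      congr 1
      apply prod3_ext
      · intro i
        by_cases h1 : 0 < a (i, 1)
        · have := hni i
          simp [funA_0, Finset.mem_filter, h1]
          omega
        · simp [funA_0, Finset.mem_filter, h1]
      · intro i
        by_cases h1 : 0 < a (i, 1) <;> simp [funA_1, Finset.mem_filter, h1] <;> omega
      · intro i
        simp [funA_2]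
  · obtain ⟨p1, p2, p3⟩ := p
    simp only [Psi]
    rw [Phi_neg _ _ _ _ (by omega) Finset.not_nonempty_empty]
    simp

lemma key (n m : ℕ) (hm : 1 ≤ m) :
    (G n m).card + (2 * n + m - 1).choose (2 * n) =
      ∑ i ∈ Finset.range (n + 1), n.choose i * (2 * n + m - i).choose (2 * n) := by
  have h1 : (BIG n m).card = (G n m).card + (Trip n (m - 1)).card := by
    rw [← Finset.card_disjSum]
    exact (Finset.card_nbij' Phi Psi (hi_lemma hm) (hj_lemma hm) left_inv_lemma
      right_inv_lemma)
  have h2 : (BIG n m).card =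
      ∑ i ∈ Finset.range (n + 1), n.choose i * (2 * n + m - i).choose (2 * n) := by
    rw [BIG, Finset.card_sigma]
    have hc : ∀ T : Finset (Fin n), (Tr n m T).card = (2 * n + m - T.card).choose (2 * n) := by
      intro T
      unfold Tr
      split_ifs with h
      · rw [card_Trip]
        congr 1
        omega
      · rw [Finset.card_empty, eq_comm]
        apply Nat.choose_eq_zero_of_lt
        have h2 : T.card ≤ n := by simpa using Finset.card_le_univ T
        omega
    have hps := Finset.sum_powerset_apply_card
      (f := fun i => (2 * n + m - i).choose (2 * n)) (x := (Finset.univ : Finset (Fin n)))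
    simp only [Finset.powerset_univ, Finset.card_univ, Fintype.card_fin, smul_eq_mul] at hps
    rw [← hps]
    exact Finset.sum_congr rfl fun T _ => hc T
  rw [← h2, h1, card_Trip]
  congr 2
  omega

theorem stmt_8 (n m : ℕ) (hn : 2 ≤ n) (hm : 1 ≤ m) :
    Set.ncard {a : Fin n × Fin 3 → ℕ | (∑ v : Fin n × Fin 3, a v) = m ∧
        ¬ ∃ i j : Fin n, i < j ∧ 0 < a (i, 0) ∧ 0 < a (i, 1) ∧ 0 < a (j, 2)} =
      (∑ i ∈ Finset.range (n + 1), n.choose i * (2 * n + m - i).choose (2 * n)) -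
        (2 * n + m - 1).choose (2 * n) := by
  have hset : {a : Fin n × Fin 3 → ℕ | (∑ v : Fin n × Fin 3, a v) = m ∧
      ¬ ∃ i j : Fin n, i < j ∧ 0 < a (i, 0) ∧ 0 < a (i, 1) ∧ 0 < a (j, 2)} = ↑(G n m) := by
    ext a
    simp [G, Finset.mem_piAntidiag, good]
  rw [hset, Set.ncard_coe_finset]
  have := key n m hm
  omega
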